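/- arXiv:2110.09340 — 2 statements merged into one kernel-verified Lean document; each statement's English description precedes it below -/
import Mathlib

section
/- For every (k,m) ∈ ℕ × ℕ*, the intersection of the images of all iterates of F_{k,m} on 𝓔 equals ℳ_{k,m}: ⋂_{n≥1} F_{k,m}^{∘n}(𝓔) = ℳ_{k,m}. -/
noncomputable section

/-- Model of the space `𝓔 = ℂ^{ℕ*}` of complex sequences `(x_i)_{i ≥ 1}`:
functions `ℕ → ℂ` with a dummy coordinate `x 0` which encodes the convention `x₀ := 0`. -/
abbrev Eseq : Type := ℕ → ℂ

/-- The submodule of `ℕ → ℂ` corresponding to `𝓔` (dummy coordinate `0` vanishes). -/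
def E0 : Submodule ℂ Eseq where
  carrier := {x | x 0 = 0}
  add_mem' := by
    rintro a b ha hb
    simp only [Set.mem_setOf_eq, Pi.add_apply] at *
    rw [ha, hb]; ring
  zero_mem' := rfl
  smul_mem' := by
    rintro c a ha
    simp only [Set.mem_setOf_eq, Pi.smul_apply] at *
    rw [ha, smul_zero]

/-- `𝓛`: the subspace of constant sequences. -/
def Lconst : Submodule ℂ Eseq where
  carrier := {x | x 0 = 0 ∧ ∀ i, 1 ≤ i → x i = x 1}
  add_mem' := by
    rintro a b ⟨ha0, ha⟩ ⟨hb0, hb⟩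
    exact ⟨by simp [ha0, hb0], fun i hi => by simp only [Pi.add_apply, ha i hi, hb i hi]⟩
  zero_mem' := ⟨rfl, fun i _ => rfl⟩
  smul_mem' := by
    rintro c a ⟨ha0, ha⟩
    exact ⟨by simp [ha0], fun i hi => by simp only [Pi.smul_apply, ha i hi]⟩

/-- `ℋ_{k,m} = {x ∈ 𝓔 : β x_{k+m} − x_k = 0}` (convention `x₀ := 0`). -/
def Hspace (β : ℂ) (k m : ℕ) : Submodule ℂ Eseq where
  carrier := {x | x 0 = 0 ∧ β * x (k + m) - x k = 0}
  add_mem' := by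
    rintro a b ⟨ha0, ha⟩ ⟨hb0, hb⟩
    refine ⟨by simp [ha0, hb0], ?_⟩
    simp only [Pi.add_apply]
    linear_combination ha + hb
  zero_mem' := ⟨rfl, by simp⟩
  smul_mem' := by
    rintro c a ⟨ha0, ha⟩
    refine ⟨by simp [ha0], ?_⟩
    simp only [Pi.smul_apply, smul_eq_mul]
    linear_combination c * ha

/-- `𝓟_{k,m} = {x ∈ 𝓔 : x_{i+m} = x_i for all i ≥ k+1}`. -/
def Pspace (k m : ℕ) : Submodule ℂ Eseq where
  carrier := {x | x 0 = 0 ∧ ∀ i, k + 1 ≤ i → x (i + m) = x i}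
  add_mem' := by
    rintro a b ⟨ha0, ha⟩ ⟨hb0, hb⟩
    exact ⟨by simp [ha0, hb0], fun i hi => by simp only [Pi.add_apply, ha i hi, hb i hi]⟩
  zero_mem' := ⟨rfl, fun i _ => rfl⟩
  smul_mem' := by
    rintro c a ⟨ha0, ha⟩
    exact ⟨by simp [ha0], fun i hi => by simp only [Pi.smul_apply, ha i hi]⟩

/-- `ℳ_{k,m} = 𝓟_{k,m} ∩ ℋ_{k,m}`. -/
def Mspace (β : ℂ) (k m : ℕ) : Submodule ℂ Eseq := Pspace k m ⊓ Hspace β k m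

/-- `Q : 𝓔 → 𝓔`, `Q(x)_1 = 0`, `Q(x)_i = x_{i-1}^d` for `i ≥ 2`. -/
def Qmap (d : ℕ) (x : Eseq) : Eseq := fun i => if 2 ≤ i then (x (i - 1)) ^ d else 0

/-- The constant subtracted by the projection `π_{k,m}` onto `ℋ_{k,m}` parallel to `𝓛`. -/
def kappa (β : ℂ) (k m : ℕ) (x : Eseq) : ℂ :=
  if k = 0 then x m else (β * x (k + m) - x k) / (β - 1)

/-- `π_{k,m} : 𝓔 → 𝓔`, the projection onto `ℋ_{k,m}` parallel to `𝓛`. -/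
def projH (β : ℂ) (k m : ℕ) (x : Eseq) : Eseq :=
  fun i => if i = 0 then 0 else x i - kappa β k m x

/-- `F_{k,m} = π_{k,m} ∘ Q`. -/
def Fmap (β : ℂ) (d k m : ℕ) (x : Eseq) : Eseq := projH β k m (Qmap d x)

/-- The coordinate linear form `ω_i` on `ℳ_{k,m}`. -/
def omegaForm (β : ℂ) (k m : ℕ) (i : ℕ) : Module.Dual ℂ (Mspace β k m) where
  toFun v := (v : Eseq) i
  map_add' a b := rfl
  map_smul' c a := rfl

/-- `L` is the derivative `D_x F_{k,m} : ℳ_{k,m} → ℳ_{k,m}` of `F_{k,m}` at `x`: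
in every direction `v ∈ ℳ_{k,m}` and coordinate `i`, `L v` is the derivative at `t = 0`
of `t ↦ F_{k,m}(x + t v)_i`. -/
def IsDerivAt (β : ℂ) (d k m : ℕ) (x : Eseq)
    (L : Mspace β k m →ₗ[ℂ] Mspace β k m) : Prop :=
  ∀ v : Mspace β k m, ∀ i : ℕ,
    ((L v : Eseq) i) = deriv (fun t : ℂ => Fmap β d k m (x + t • (v : Eseq)) i) 0

/-- The critical set `C(F_{k,m})`: points of `ℳ_{k,m}` where the derivative is not invertible. -/
def CsetD (β : ℂ) (d k m : ℕ) : Set Eseq :=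
  {x | x ∈ Mspace β k m ∧
    ∀ L : Mspace β k m →ₗ[ℂ] Mspace β k m, IsDerivAt β d k m x L → ¬ Function.Bijective L}

/-- The post-critical set `PC(F_{k,m}) = ⋃_{j ≥ 1} F_{k,m}^{∘j}(C(F_{k,m}))`. -/
def PCsetD (β : ℂ) (d k m : ℕ) : Set Eseq :=
  ⋃ j : ℕ, ⋃ _ : 1 ≤ j, (Fmap β d k m)^[j] '' CsetD β d k m

/-- `Δ_{k,m} = {x ∈ ℳ_{k,m} : x_i = x_j for some 1 ≤ i < j ≤ k+m}`. -/
def Delta (β : ℂ) (k m : ℕ) : Set Eseq :=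
  {x | x ∈ Mspace β k m ∧ ∃ i j : ℕ, 1 ≤ i ∧ i < j ∧ j ≤ k + m ∧ x i = x j}

/-- Coordinates of a point of `ℂ^n`, indexed from `1` to `n`, with the convention `x₀ := 0`
(and value `0` out of range). -/
def coordFin {n : ℕ} (x : Fin n → ℂ) (i : ℕ) : ℂ :=
  if h : 1 ≤ i ∧ i ≤ n then x ⟨i - 1, by omega⟩ else 0

/-- The Koch map `G_{k,m} : ℂ^{k+m-1} → ℂ^{k+m-1}`. -/
def Gmap (β : ℂ) (d k m : ℕ) (x : Fin (k + m - 1) → ℂ) : Fin (k + m - 1) → ℂ :=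
  if k = 0 then
    fun j => (coordFin x j.1) ^ d - (coordFin x (m - 1)) ^ d
  else
    fun j =>
      (coordFin x j.1 - (β * coordFin x (k + m - 1) - coordFin x (k - 1)) / (β - 1)) ^ d

/-- The critical set `C(G_{k,m})`: points where the derivative is not invertible. -/
def Gcrit (β : ℂ) (d k m : ℕ) : Set (Fin (k + m - 1) → ℂ) :=
  {z | ¬ Function.Bijective (fderiv ℂ (Gmap β d k m) z)}

/-- The post-critical set `PC(G_{k,m}) = ⋃_{j ≥ 1} G_{k,m}^{∘j}(C(G_{k,m}))`. -/
def GPC (β : ℂ) (d k m : ℕ) : Set (Fin (k + m - 1) → ℂ) :=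
  ⋃ j : ℕ, ⋃ _ : 1 ≤ j, (Gmap β d k m)^[j] '' Gcrit β d k m

/-- The polynomial `P_z` associated to a point `z ∈ ℂ^{k+m-1}`. -/
def Ppoly (β : ℂ) (d k m : ℕ) (z : Fin (k + m - 1) → ℂ) : ℂ → ℂ :=
  if k = 0 then fun t => t ^ d - (coordFin z (m - 1)) ^ d
  else fun t => (t - (β * coordFin z (k + m - 1) - coordFin z (k - 1)) / (β - 1)) ^ d

/-!
Write `κ` for the constant subtracted by `π_{k,m}`, so that `F(x)_{i+1} = x_i ^ d - κ(Q x)` and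
`F(x) ∈ ℋ_{k,m}` for every `x`. If `z ∈ ℋ_{k,m}` is `m`-periodic on the indices `(k, k + N]`, then
`F(z)` is `m`-periodic on `(k, k + N + 1]`, because `β ^ d = 1`; hence every point of the image of
`F^{∘(n+1)}` is `m`-periodic on `(k, k + n]`, and the intersection of the images lies in `ℳ_{k,m}`.
Conversely `F` maps `ℳ_{k,m}` onto itself: `π_{k,m}` fixes `ℋ_{k,m}` and is blind to adding a
constant, so a preimage of `y ∈ ℳ_{k,m}` is obtained by taking `d`-th roots of `y_{j+1} - y_1`.
-/

section

variable {β : ℂ} {d k m : ℕ}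

lemma kappa_eq_add_of_forall_eq_add (hβ1 : β ≠ 1) (hm : 1 ≤ m) {u v : Eseq} {c : ℂ}
    (h : ∀ i, 1 ≤ i → u i = v i + c) : kappa β k m u = kappa β k m v + c := by
  unfold kappa
  split_ifs with hk
  · exact h m hm
  · rw [h (k + m) (by omega), h k (by omega)]
    field_simp [sub_ne_zero.mpr hβ1]
    ring

lemma projH_eq_of_forall_eq_add (hβ1 : β ≠ 1) (hm : 1 ≤ m) {u v : Eseq} {c : ℂ}
    (h : ∀ i, 1 ≤ i → u i = v i + c) : projH β k m u = projH β k m v := by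
  funext i
  unfold projH
  split_ifs with hi
  · rfl
  · rw [h i (by omega), kappa_eq_add_of_forall_eq_add hβ1 hm h]
    ring

lemma kappa_eq_zero_of_mem_Hspace (hβ0 : β ≠ 0) {y : Eseq} (hy : y ∈ Hspace β k m) :
    kappa β k m y = 0 := by
  obtain ⟨hy0, hyH⟩ := hy
  unfold kappa
  split_ifs with hk
  · subst hk
    rw [zero_add, hy0, sub_zero] at hyH
    exact (mul_eq_zero.mp hyH).resolve_left hβ0
  · rw [hyH, zero_div]

lemma projH_eq_self_of_mem_Hspace (hβ0 : β ≠ 0) {y : Eseq} (hy : y ∈ Hspace β k m) :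
    projH β k m y = y := by
  funext i
  unfold projH
  split_ifs with hi
  · rw [hi, hy.1]
  · rw [kappa_eq_zero_of_mem_Hspace hβ0 hy, sub_zero]

lemma projH_mem_Hspace (hβ1 : β ≠ 1) (hm : 1 ≤ m) (x : Eseq) : projH β k m x ∈ Hspace β k m := by
  refine ⟨rfl, ?_⟩
  unfold projH kappa
  rcases Nat.eq_zero_or_pos k with rfl | hk
  · simp only [if_pos, if_neg (by omega : m ≠ 0), zero_add]
    ring
  · rw [if_neg (by omega), if_neg (by omega), if_neg (by omega)]
    field_simp [sub_ne_zero.mpr hβ1]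
    ring

lemma Fmap_mem_Hspace (hβ1 : β ≠ 1) (hm : 1 ≤ m) (x : Eseq) : Fmap β d k m x ∈ Hspace β k m :=
  projH_mem_Hspace hβ1 hm _

lemma Qmap_succ (hd : d ≠ 0) {z : Eseq} (hz : z 0 = 0) (i : ℕ) : Qmap d z (i + 1) = z i ^ d := by
  unfold Qmap
  split_ifs with h
  · rw [Nat.add_sub_cancel]
  · obtain rfl : i = 0 := by omega
    rw [hz, zero_pow hd]

lemma Fmap_succ (hd : d ≠ 0) {z : Eseq} (hz : z 0 = 0) (i : ℕ) :
    Fmap β d k m z (i + 1) = z i ^ d - kappa β k m (Qmap d z) := by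
  rw [Fmap, projH, if_neg i.succ_ne_zero, Qmap_succ hd hz]

/-- At the new index `k + 1`, `β z_{k+m} = z_k` and `β ^ d = 1` give `z_{k+m} ^ d = z_k ^ d`. -/
lemma Fmap_add_period (hd : d ≠ 0) (hβd : β ^ d = 1) {z : Eseq} (hz : z ∈ Hspace β k m) (N : ℕ)
    (hper : ∀ i, k < i → i ≤ k + N → z (i + m) = z i) :
    ∀ i, k < i → i ≤ k + N + 1 → Fmap β d k m z (i + m) = Fmap β d k m z i := by
  rintro i hki hiN
  obtain ⟨j, rfl⟩ : ∃ j, i = j + 1 := ⟨i - 1, by omega⟩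
  rw [add_right_comm, Fmap_succ hd hz.1, Fmap_succ hd hz.1, sub_left_inj]
  rcases (Nat.lt_succ_iff.mp hki).eq_or_lt with rfl | hkj
  · rw [← sub_eq_zero.mp hz.2, mul_pow, hβd, one_mul]
  · rw [hper j hkj (by omega)]

lemma Fmap_iterate_add_period (hd : d ≠ 0) (hβd : β ^ d = 1) (hβ1 : β ≠ 1) (hm : 1 ≤ m)
    {x : Eseq} (hx : x ∈ Hspace β k m) (n : ℕ) :
    ∀ i, k < i → i ≤ k + n → (Fmap β d k m)^[n] x (i + m) = (Fmap β d k m)^[n] x i := by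
  induction n with
  | zero => intro i hki hik; omega
  | succ n ih =>
    simp only [Function.iterate_succ_apply']
    have hmaps : Set.MapsTo (Fmap β d k m) (Hspace β k m) (Hspace β k m) :=
      fun y _ => Fmap_mem_Hspace hβ1 hm y
    exact Fmap_add_period hd hβd (hmaps.iterate n hx) n ih

/-- Since `F(x)_{j+1} = x_j ^ d - κ` and `κ = -y_1` on a preimage of `y`, the coordinates are
`d`-th roots of `y_{j+1} - y_1`; the twist by `β⁻¹` beyond index `k` makes `β x_{k+m} = x_k`. -/
def FmapRightInv (β : ℂ) (d k : ℕ) (y : Eseq) : Eseq :=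
  fun j => (if k < j then β⁻¹ else 1) * (y (j + 1) - y 1) ^ ((d : ℂ)⁻¹)

lemma FmapRightInv_pow (hd : d ≠ 0) (hβd : β ^ d = 1) (y : Eseq) (j : ℕ) :
    FmapRightInv β d k y j ^ d = y (j + 1) - y 1 := by
  unfold FmapRightInv
  rw [mul_pow, Complex.cpow_nat_inv_pow _ hd]
  split_ifs <;> simp [inv_pow, hβd]

lemma FmapRightInv_mem_Mspace (hd : d ≠ 0) (hβ0 : β ≠ 0) (hm : 1 ≤ m) {y : Eseq}
    (hy : y ∈ Pspace k m) : FmapRightInv β d k y ∈ Mspace β k m := by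
  obtain ⟨-, hyP⟩ := hy
  have hx0 : FmapRightInv β d k y 0 = 0 := by
    simp [FmapRightInv, Complex.zero_cpow (inv_ne_zero (Nat.cast_ne_zero.mpr hd))]
  refine ⟨⟨hx0, fun i hi => ?_⟩, ⟨hx0, ?_⟩⟩
  · simp only [FmapRightInv, add_right_comm i m 1, hyP (i + 1) (by omega),
      if_pos (by omega : k < i + m), if_pos (by omega : k < i)]
  · simp only [FmapRightInv, add_right_comm k m 1, hyP (k + 1) le_rfl,
      if_pos (by omega : k < k + m), lt_irrefl, if_false]
    rw [← mul_assoc, mul_inv_cancel₀ hβ0]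
    ring

lemma Fmap_rightInvOn (hd : d ≠ 0) (hβd : β ^ d = 1) (hβ1 : β ≠ 1) (hm : 1 ≤ m)
    (hβ0 : β ≠ 0) : Set.RightInvOn (FmapRightInv β d k) (Fmap β d k m) (Mspace β k m) := by
  intro y hy
  have hQ : ∀ i, 1 ≤ i → Qmap d (FmapRightInv β d k y) i = y i + -y 1 := by
    intro i hi
    obtain ⟨j, rfl⟩ := Nat.exists_eq_add_of_le' hi
    unfold Qmap
    split_ifs with h
    · rw [Nat.add_sub_cancel, FmapRightInv_pow hd hβd]
      ring
    · obtain rfl : j = 0 := by omega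
      ring
  rw [Fmap, projH_eq_of_forall_eq_add hβ1 hm hQ, projH_eq_self_of_mem_Hspace hβ0 hy.2]

lemma Fmap_surjOn_Mspace (hd : d ≠ 0) (hβd : β ^ d = 1) (hβ1 : β ≠ 1) (hm : 1 ≤ m) :
    Set.SurjOn (Fmap β d k m) (Mspace β k m) (Mspace β k m) := by
  have hβ0 : β ≠ 0 := by
    rintro rfl
    simp [zero_pow hd] at hβd
  exact (Fmap_rightInvOn hd hβd hβ1 hm hβ0).surjOn
    fun y hy => FmapRightInv_mem_Mspace hd hβ0 hm hy.1

end

/-- `⋂_{n ≥ 1} F_{k,m}^{∘n}(𝓔) = ℳ_{k,m}`. -/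
theorem stmt5 (d : ℕ) (hd : 2 ≤ d) (β : ℂ) (hβd : β ^ d = 1) (hβ1 : β ≠ 1)
    (k m : ℕ) (hm : 1 ≤ m) :
    (⋂ n : ℕ, ⋂ _ : 1 ≤ n, (Fmap β d k m)^[n] '' (E0 : Set Eseq)) =
      (Mspace β k m : Set Eseq) := by
  have hd0 : d ≠ 0 := by omega
  refine Set.Subset.antisymm (fun z hz => ?_) (fun z hz => ?_)
  · simp only [Set.mem_iInter] at hz
    have hzH : z ∈ Hspace β k m := by
      obtain ⟨x, -, rfl⟩ := hz 1 le_rfl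
      exact Fmap_mem_Hspace hβ1 hm x
    refine ⟨⟨hzH.1, fun i hi => ?_⟩, hzH⟩
    obtain ⟨x, -, rfl⟩ := hz (i + 1) (by omega)
    rw [Function.iterate_succ_apply]
    exact Fmap_iterate_add_period hd0 hβd hβ1 hm (Fmap_mem_Hspace hβ1 hm x) i i (by omega)
      (by omega)
  · simp only [Set.mem_iInter]
    intro n _
    obtain ⟨x, hx, rfl⟩ := (Fmap_surjOn_Mspace hd0 hβd hβ1 hm).iterate n hz
    exact ⟨x, hx.1.1, rfl⟩
end
end

section
/- Let (k,m) ∈ ℕ × ℕ*, let z ∈ ℳ_{k,m} be a fixed point of F_{k,m}, let L : ℳ_{k,m} → ℳ_{k,m} be the derivative D_z F_{k,m}, let L^* : ℳ_{k,m}^* → ℳ_{k,m}^* be its transpose (L^*ω = ω ∘ L), and set δ_i = d·z_i^{d−1} for i ≥ 1. Then L^*ω_1 = −δ_{m−1}·ω_{m−1} if k = 0, and L^*ω_1 = −(β·δ_{k+m−1}·ω_{k+m−1} − δ_{k−1}·ω_{k−1})/(β − 1) if k ≥ 1; and L^*ω_i = δ_{i−1}·ω_{i−1} + L^*ω_1 for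 all i ≥ 2. -/
noncomputable section

/-! `π_{k,m}` is affine with linear part `x ↦ x - κ(x)`, so `D_z F (v)_i = δ_{i-1} v_{i-1} - κ(D_z Q v)`
for `i ≥ 1`. Since `v₀ = 0`, the first coordinate is `-κ(D_z Q v)`, which is `ω_1 ∘ L`, and every
other coordinate differs from it by `δ_{i-1} v_{i-1}`. -/

@[simp] lemma omegaForm_apply (β : ℂ) (k m i : ℕ) (v : Mspace β k m) :
    omegaForm β k m i v = (v : Eseq) i := rfl

lemma mem_Mspace_apply_zero {β : ℂ} {k m : ℕ} (v : Mspace β k m) : (v : Eseq) 0 = 0 :=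
  v.2.1.1

/-- `D_z Q (v)` without the case split of `Qmap`: for `i = 0, 1` truncated subtraction makes it
`0` as soon as `v 0 = 0`. -/
def dQmap (d : ℕ) (z v : Eseq) : Eseq := fun i => (d : ℂ) * z (i - 1) ^ (d - 1) * v (i - 1)

lemma hasDerivAt_Qmap_apply (d : ℕ) (z : Eseq) {v : Eseq} (hv : v 0 = 0) (i : ℕ) :
    HasDerivAt (fun t : ℂ => Qmap d (z + t • v) i) (dQmap d z v i) 0 := by
  unfold Qmap dQmap
  by_cases hi : 2 ≤ i
  · simp only [hi, if_true, Pi.add_apply, Pi.smul_apply, smul_eq_mul]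
    have hline : HasDerivAt (fun t : ℂ => z (i - 1) + t * v (i - 1)) (v (i - 1)) 0 := by
      simpa using ((hasDerivAt_id (0 : ℂ)).mul_const (v (i - 1))).const_add (z (i - 1))
    simpa [mul_assoc] using hline.fun_pow d
  · have hi' : i - 1 = 0 := by omega
    simpa only [hi, if_false, hi', hv, mul_zero] using hasDerivAt_const (0 : ℂ) (0 : ℂ)

section Projection

variable (β : ℂ) (k m : ℕ) {f : ℂ → Eseq} {f' : Eseq} {t₀ : ℂ}

lemma hasDerivAt_kappa (hf : ∀ i, HasDerivAt (fun t => f t i) (f' i) t₀) :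
    HasDerivAt (fun t => kappa β k m (f t)) (kappa β k m f') t₀ := by
  unfold kappa
  split_ifs
  · exact hf m
  · exact (((hf (k + m)).const_mul β).sub (hf k)).div_const (β - 1)

lemma hasDerivAt_projH_apply (hf : ∀ i, HasDerivAt (fun t => f t i) (f' i) t₀) (i : ℕ) :
    HasDerivAt (fun t => projH β k m (f t) i) (projH β k m f' i) t₀ := by
  unfold projH
  split_ifs
  · exact hasDerivAt_const t₀ 0
  · exact (hf i).sub (hasDerivAt_kappa β k m hf)

end Projection

lemma IsDerivAt.apply {β : ℂ} {d k m : ℕ} {z : Eseq} {L : Mspace β k m →ₗ[ℂ] Mspace β k m}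
    (hL : IsDerivAt β d k m z L) (v : Mspace β k m) {i : ℕ} (hi : i ≠ 0) :
    (L v : Eseq) i = d * z (i - 1) ^ (d - 1) * (v : Eseq) (i - 1)
      - kappa β k m (dQmap d z v) := by
  rw [hL v i]
  unfold Fmap
  rw [(hasDerivAt_projH_apply β k m (hasDerivAt_Qmap_apply d z (mem_Mspace_apply_zero v)) i).deriv,
    projH, if_neg hi]
  rfl

theorem stmt13_general (d : ℕ) (β : ℂ)
    (k m : ℕ) (z : Eseq)
    (L : Mspace β k m →ₗ[ℂ] Mspace β k m) (hL : IsDerivAt β d k m z L) :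
    (k = 0 → L.dualMap (omegaForm β k m 1) =
      (-((d : ℂ) * z (m - 1) ^ (d - 1))) • omegaForm β k m (m - 1)) ∧
    (1 ≤ k → L.dualMap (omegaForm β k m 1) =
      (-(β - 1)⁻¹) • ((β * ((d : ℂ) * z (k + m - 1) ^ (d - 1))) • omegaForm β k m (k + m - 1)
        - ((d : ℂ) * z (k - 1) ^ (d - 1)) • omegaForm β k m (k - 1))) ∧
    (∀ i, 2 ≤ i → L.dualMap (omegaForm β k m i) =
      ((d : ℂ) * z (i - 1) ^ (d - 1)) • omegaForm β k m (i - 1)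
        + L.dualMap (omegaForm β k m 1)) := by
  have hL₁ (v : Mspace β k m) : (L v : Eseq) 1 = -kappa β k m (dQmap d z v) := by
    simp [hL.apply v one_ne_zero, mem_Mspace_apply_zero v]
  refine ⟨fun hk => ?_, fun hk => ?_, fun i hi => ?_⟩ <;> ext v <;>
    simp only [LinearMap.dualMap_apply, LinearMap.add_apply, LinearMap.sub_apply,
      LinearMap.smul_apply, omegaForm_apply, smul_eq_mul]
  · rw [hL₁, kappa, if_pos hk, dQmap]
    ring
  · rw [hL₁, kappa, if_neg (by omega), dQmap, dQmap]
    ring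
  · rw [hL.apply v (by omega), hL₁]
    ring

/-- action of the transpose `L^*` of `L = D_z F_{k,m}` on the coordinate
forms, where `δ_i = d z_i^{d-1}`. -/
theorem stmt13 (d : ℕ) (hd : 2 ≤ d) (β : ℂ) (hβd : β ^ d = 1) (hβ1 : β ≠ 1)
    (k m : ℕ) (hm : 1 ≤ m) (z : Eseq) (hz : z ∈ Mspace β k m)
    (hfix : Fmap β d k m z = z)
    (L : Mspace β k m →ₗ[ℂ] Mspace β k m) (hL : IsDerivAt β d k m z L) :
    (k = 0 → L.dualMap (omegaForm β k m 1) =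
      (-((d : ℂ) * z (m - 1) ^ (d - 1))) • omegaForm β k m (m - 1)) ∧
    (1 ≤ k → L.dualMap (omegaForm β k m 1) =
      (-(β - 1)⁻¹) • ((β * ((d : ℂ) * z (k + m - 1) ^ (d - 1))) • omegaForm β k m (k + m - 1)
        - ((d : ℂ) * z (k - 1) ^ (d - 1)) • omegaForm β k m (k - 1))) ∧
    (∀ i, 2 ≤ i → L.dualMap (omegaForm β k m i) =
      ((d : ℂ) * z (i - 1) ^ (d - 1)) • omegaForm β k m (i - 1)
        + L.dualMap (omegaForm β k m 1)) :=
  stmt13_general d β k m z L hL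
end
end
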